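/- For every natural number n and every real y, ∫_ℝ e^{−(x−y)²/2} · H_n(x) · e^{−x²/2} dx = √π · e^{−y²/4} · yⁿ, where H_n is the physicists' Hermite polynomial of degree n. -/

import Mathlib

/-!
Since `e^{-(x-y)²/2} e^{x²} e^{-x²/2} = e^{-y²/2} e^{yx}`, the integral equals
`(-1)ⁿ e^{-y²/2} ∫ e^{yx} (dⁿ/dxⁿ) e^{-x²} dx`. Every derivative of `e^{-x²}` is a polynomial
times `e^{-x²}`, so all the integrands are integrable and `n` integrations by parts move the
derivatives onto `e^{yx}`, producing `(-y)ⁿ ∫ e^{yx} e^{-x²} dx`. Completing the square, the last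
integral is `√π e^{y²/4}`.
-/

open MeasureTheory

/-- Physicists' Hermite polynomial via the Rodrigues formula:
`H_n(x) = (−1)ⁿ e^{x²} (dⁿ/dxⁿ)(e^{−x²})`. -/
noncomputable def physHermite (n : ℕ) (x : ℝ) : ℝ :=
  (-1) ^ n * Real.exp (x ^ 2) * iteratedDeriv n (fun y => Real.exp (-y ^ 2)) x

open Real Polynomial

lemma hasDerivAt_eval_mul_exp_neg_sq (p : ℝ[X]) (x : ℝ) :
    HasDerivAt (fun t => p.eval t * exp (-t ^ 2))
      ((derivative p - C 2 * X * p).eval x * exp (-x ^ 2)) x := by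
  have hexp : HasDerivAt (fun t => exp (-t ^ 2)) (exp (-x ^ 2) * -(2 * x)) x := by
    simpa using (hasDerivAt_pow 2 x).neg.exp
  refine ((p.hasDerivAt x).mul hexp).congr_deriv ?_
  simp only [eval_sub, eval_mul, eval_C, eval_X]
  ring

lemma exists_iteratedDeriv_exp_neg_sq_eq (n : ℕ) :
    ∃ p : ℝ[X], iteratedDeriv n (fun x => exp (-x ^ 2)) = fun x => p.eval x * exp (-x ^ 2) := by
  induction n with
  | zero => exact ⟨1, by simp⟩
  | succ n ih =>
    obtain ⟨p, hp⟩ := ih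
    refine ⟨derivative p - C 2 * X * p, funext fun x => ?_⟩
    rw [iteratedDeriv_succ, hp, (hasDerivAt_eval_mul_exp_neg_sq p x).deriv]

lemma integrable_pow_mul_exp_neg_sq (n : ℕ) : Integrable fun x : ℝ => x ^ n * exp (-x ^ 2) := by
  simpa using integrable_rpow_mul_exp_neg_mul_sq one_pos (s := n)
    (by linarith [n.cast_nonneg (α := ℝ)])

lemma integrable_eval_mul_exp_neg_sq (p : ℝ[X]) :
    Integrable fun x => p.eval x * exp (-x ^ 2) := by
  induction p using Polynomial.induction_on' with
  | add p q hp hq => exact (hp.add hq).congr (.of_forall fun x => by simp [add_mul])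
  | monomial n a => simpa [mul_assoc] using (integrable_pow_mul_exp_neg_sq n).const_mul a

lemma exp_mul_mul_exp_neg_sq (c x : ℝ) :
    exp (c * x) * exp (-x ^ 2) = exp (c ^ 2 / 4) * exp (-(x - c / 2) ^ 2) := by
  rw [← exp_add, ← exp_add]
  ring_nf

lemma integrable_exp_mul_mul_eval_mul_exp_neg_sq (c : ℝ) (p : ℝ[X]) :
    Integrable fun x => exp (c * x) * (p.eval x * exp (-x ^ 2)) := by
  have hshift := (integrable_eval_mul_exp_neg_sq (p.comp (X + C (c / 2)))).comp_sub_right (c / 2)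
  refine (hshift.const_mul (exp (c ^ 2 / 4))).congr (.of_forall fun x => ?_)
  simp only [eval_comp, eval_add, eval_X, eval_C, sub_add_cancel]
  linear_combination -p.eval x * exp_mul_mul_exp_neg_sq c x

lemma integral_exp_mul_mul_exp_neg_sq (c : ℝ) :
    ∫ x, exp (c * x) * exp (-x ^ 2) = √π * exp (c ^ 2 / 4) := by
  simp_rw [exp_mul_mul_exp_neg_sq, integral_const_mul,
    integral_sub_right_eq_self (fun x => exp (-x ^ 2)) (c / 2)]
  simpa [mul_comm] using integral_gaussian 1

lemma integral_exp_mul_mul_deriv {c : ℝ} {v v' : ℝ → ℝ} (hv : ∀ x, HasDerivAt v (v' x) x)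
    (hint : Integrable fun x => exp (c * x) * v x)
    (hint' : Integrable fun x => exp (c * x) * v' x) :
    ∫ x, exp (c * x) * v' x = -c * ∫ x, exp (c * x) * v x := by
  have hu : ∀ x, HasDerivAt (fun t => exp (c * t)) (c * exp (c * x)) x := fun x => by
    simpa [mul_comm] using ((hasDerivAt_id x).const_mul c).exp
  have hu' : Integrable fun x => c * exp (c * x) * v x := by
    simpa [mul_assoc] using hint.const_mul c
  rw [integral_mul_deriv_eq_deriv_mul_of_integrable (fun x _ => hu x) (fun x _ => hv x)
    hint' hu' hint, neg_mul, ← integral_const_mul]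
  simp_rw [mul_assoc]

lemma integral_exp_mul_mul_iteratedDeriv_exp_neg_sq (c : ℝ) (n : ℕ) :
    ∫ x, exp (c * x) * iteratedDeriv n (fun x => exp (-x ^ 2)) x
      = (-c) ^ n * ∫ x, exp (c * x) * exp (-x ^ 2) := by
  induction n with
  | zero => simp
  | succ n ih =>
    obtain ⟨p, hp⟩ := exists_iteratedDeriv_exp_neg_sq_eq n
    obtain ⟨q, hq⟩ := exists_iteratedDeriv_exp_neg_sq_eq (n + 1)
    have hderiv : ∀ x, HasDerivAt (iteratedDeriv n fun x => exp (-x ^ 2))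
        (iteratedDeriv (n + 1) (fun x => exp (-x ^ 2)) x) x := fun x => by
      rw [iteratedDeriv_succ, hp]
      exact (hasDerivAt_eval_mul_exp_neg_sq p x).differentiableAt.hasDerivAt
    rw [integral_exp_mul_mul_deriv hderiv, ih, pow_succ]
    · ring
    · simpa only [hp] using integrable_exp_mul_mul_eval_mul_exp_neg_sq c p
    · simpa only [hq] using integrable_exp_mul_mul_eval_mul_exp_neg_sq c q

/-- Hermite–Fourier coefficients of the Gaussian interaction kernel:
`∫ e^{−(x−y)²/2} H_n(x) e^{−x²/2} dx = √π e^{−y²/4} yⁿ`. -/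
theorem stmt_12 (n : ℕ) (y : ℝ) :
    ∫ x : ℝ, Real.exp (-(x - y) ^ 2 / 2) * physHermite n x * Real.exp (-x ^ 2 / 2)
      = Real.sqrt Real.pi * Real.exp (-y ^ 2 / 4) * y ^ n := by
  have hweight : ∀ x, exp (-(x - y) ^ 2 / 2) * physHermite n x * exp (-x ^ 2 / 2)
      = (-1) ^ n * exp (-y ^ 2 / 2) *
        (exp (y * x) * iteratedDeriv n (fun t => exp (-t ^ 2)) x) := fun x => by
    have hexponent : exp (-(x - y) ^ 2 / 2) * exp (x ^ 2) * exp (-x ^ 2 / 2)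
        = exp (-y ^ 2 / 2) * exp (y * x) := by
      simp only [← exp_add]; ring_nf
    rw [physHermite]
    linear_combination (-1) ^ n * iteratedDeriv n (fun t => exp (-t ^ 2)) x * hexponent
  have hgauss : exp (-y ^ 2 / 2) * exp (y ^ 2 / 4) = exp (-y ^ 2 / 4) := by
    rw [← exp_add]; ring_nf
  simp_rw [hweight, integral_const_mul, integral_exp_mul_mul_iteratedDeriv_exp_neg_sq,
    integral_exp_mul_mul_exp_neg_sq]
  have hsign : (-1 : ℝ) ^ n * (-y) ^ n = y ^ n := by rw [← mul_pow]; ring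
  linear_combination √π * (-1) ^ n * (-y) ^ n * hgauss + √π * exp (-y ^ 2 / 4) * hsign
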